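/- Let G̃ be obtained by the Laplacian construction from (G, v_c), with Laplacian matrix L̃, and write v_c^1 = (v_c,1), v_c^2 = (v_c,2). Then for every natural number k and every vertex v ∈ V(G), the (v,1)-entry of L̃^k(e_{v_c^1} + e_{v_c^2}) equals its (v,2)-entry. -/
import Mathlib


open SimpleGraph Matrix

/-- `v` and `w` lie in the same orbit under the automorphisms of `G` fixing `vc`. -/
def SameOrbit {V : Type*} (G : SimpleGraph V) (vc v w : V) : Prop :=
  ∃ φ : G ≃g G, φ vc = vc ∧ φ v = w

/-- `Gt` is obtained from `(G, vc)` by the Laplacian construction: the vertex set is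
`V × Fin 2`, each copy of `G` is induced, and every edge between the two copies joins
vertices lying in the same orbit under `Aut(G, vc)`. -/
def IsLapConstruction {V : Type*} (G : SimpleGraph V) (vc : V)
    (Gt : SimpleGraph (V × Fin 2)) : Prop :=
  (∀ i : Fin 2, ∀ v w : V, Gt.Adj (v, i) (w, i) ↔ G.Adj v w) ∧
  (∀ v w : V, Gt.Adj (v, 0) (w, 1) → SameOrbit G vc v w)

lemma sameOrbit_symm {V : Type*} {G : SimpleGraph V} {vc v w : V}
    (h : SameOrbit G vc v w) : SameOrbit G vc w v := by
  obtain ⟨φ, h1, h2⟩ := h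
  refine ⟨φ.symm, ?_, ?_⟩
  · conv_lhs => rw [← h1]
    simp
  · conv_lhs => rw [← h2]
    simp

lemma lap_mulVec_eq_sum_sub {α : Type*} [Fintype α] [DecidableEq α] (H : SimpleGraph α)
    [DecidableRel H.Adj] (y : α → ℝ) (u : α) :
    (H.lapMatrix ℝ *ᵥ y) u = ∑ w ∈ H.neighborFinset u, (y u - y w) := by
  rw [lapMatrix_mulVec_apply, Finset.sum_sub_distrib, Finset.sum_const,
    card_neighborFinset_eq_degree, nsmul_eq_mul]

theorem lapConstruction_symmetric_on_copies {V : Type*} [Fintype V] [DecidableEq V]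
    (G : SimpleGraph V) (vc : V)
    (Gt : SimpleGraph (V × Fin 2)) [DecidableRel Gt.Adj]
    (hC : IsLapConstruction G vc Gt) (k : ℕ) (v : V) :
    ((Gt.lapMatrix ℝ ^ k) *ᵥ (Pi.single (vc, 0) 1 + Pi.single (vc, 1) 1)) (v, 0) =
      ((Gt.lapMatrix ℝ ^ k) *ᵥ (Pi.single (vc, 0) 1 + Pi.single (vc, 1) 1)) (v, 1) := by
  classical
  set x : (V × Fin 2) → ℝ := Pi.single (vc, 0) 1 + Pi.single (vc, 1) 1 with hx
  -- cross edges always join vertices in the same orbit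
  have cross : ∀ (v w : V) (i j : Fin 2), i ≠ j → Gt.Adj (v, i) (w, j) →
      SameOrbit G vc v w := by
    intro v w i j hij hadj
    fin_cases i <;> fin_cases j <;> simp_all
    · exact hC.2 v w hadj
    · exact sameOrbit_symm (hC.2 w v hadj.symm)
  -- main induction
  suffices H : ∀ k : ℕ, ∃ f : V → ℝ, (∀ v w, SameOrbit G vc v w → f v = f w) ∧
      ∀ (v : V) (i : Fin 2), ((Gt.lapMatrix ℝ ^ k) *ᵥ x) (v, i) = f v by
    obtain ⟨f, _, hf⟩ := H k
    rw [hf v 0, hf v 1]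
  intro k
  induction k with
  | zero =>
    refine ⟨fun v => if v = vc then 1 else 0, ?_, ?_⟩
    · intro v w ⟨φ, h1, h2⟩
      by_cases hv : v = vc
      · subst hv
        rw [h1] at h2
        simp [← h2]
      · have hw : w ≠ vc := by
          intro hw
          exact hv (φ.injective (by rw [h2, hw, h1]))
        simp [hv, hw]
    · intro v i
      simp only [pow_zero, one_mulVec, hx, Pi.add_apply]
      fin_cases i <;>
        simp [Pi.single_apply, Prod.ext_iff, eq_comm]
  | succ k ih =>
    obtain ⟨f, hinv, hf⟩ := ih
    refine ⟨fun v => ∑ w ∈ G.neighborFinset v, (f v - f w), ?_, ?_⟩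
    · intro v w ⟨φ, h1, h2⟩
      refine Finset.sum_nbij' (fun u => φ u) (fun u => φ.symm u) ?_ ?_ (by simp) (by simp) ?_
      · intro u hu
        rw [SimpleGraph.mem_neighborFinset] at hu ⊢
        rw [← h2]
        exact φ.map_adj_iff.mpr hu
      · intro u hu
        rw [SimpleGraph.mem_neighborFinset] at hu ⊢
        rw [← h2] at hu
        have := φ.symm.map_adj_iff.mpr hu
        simpa using this
      · intro u hu
        have e1 : f v = f w := hinv v w ⟨φ, h1, h2⟩
        have e2 : f u = f (φ u) := hinv u (φ u) ⟨φ, h1, rfl⟩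
        rw [e1, e2]
    · intro v i
      have step : (Gt.lapMatrix ℝ ^ (k + 1)) *ᵥ x =
          Gt.lapMatrix ℝ *ᵥ ((Gt.lapMatrix ℝ ^ k) *ᵥ x) := by
        rw [pow_succ', mulVec_mulVec]
      rw [step, lap_mulVec_eq_sum_sub]
      set y := (Gt.lapMatrix ℝ ^ k) *ᵥ x with hy
      -- terms from cross edges vanish
      have hzero : ∀ p ∈ Gt.neighborFinset (v, i), p.2 ≠ i → y (v, i) - y p = 0 := by
        rintro ⟨w, j⟩ hp hj
        rw [SimpleGraph.mem_neighborFinset] at hp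
        have horb : SameOrbit G vc v w := cross v w i j (Ne.symm hj) hp
        rw [hf v i, hf w j, hinv v w horb, sub_self]
      have hsplit : ∑ p ∈ Gt.neighborFinset (v, i), (y (v, i) - y p) =
          ∑ p ∈ (Gt.neighborFinset (v, i)).filter (fun p => p.2 = i),
            (y (v, i) - y p) := by
        rw [Finset.sum_filter_of_ne]
        intro p hp hne
        by_contra hcon
        exact hne (hzero p hp hcon)
      rw [hsplit]
      refine Finset.sum_nbij' (fun p => p.1) (fun w => (w, i)) ?_ ?_ ?_ ?_ ?_
      · rintro ⟨w, j⟩ hp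
        simp only [Finset.mem_filter, SimpleGraph.mem_neighborFinset] at hp
        obtain ⟨hadj, hj⟩ := hp
        rw [hj] at hadj
        rw [SimpleGraph.mem_neighborFinset]
        exact ((hC.1 i v w).mp hadj)
      · intro w hw
        rw [SimpleGraph.mem_neighborFinset] at hw
        refine Finset.mem_filter.mpr ⟨?_, rfl⟩
        rw [SimpleGraph.mem_neighborFinset]
        exact (hC.1 i v w).mpr hw
      · rintro ⟨w, j⟩ hp
        simp only [Finset.mem_filter] at hp
        simp [hp.2]
      · intro w hw
        rfl
      · rintro ⟨w, j⟩ hp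
        simp only [Finset.mem_filter, SimpleGraph.mem_neighborFinset] at hp
        rw [hf w j, hf v i]
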